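/- arXiv:2408.05876 — 5 statements merged into one kernel-verified Lean document; each statement's English description precedes it below -/
import Mathlib

section
/- For any 4×4 Hermitian positive semidefinite matrix ρ with trace 1 that can be written as ρ = p₁ |e₁⟩⟨e₁| ⊗ σ₁ + p₂ |e₂⟩⟨e₂| ⊗ σ₂, where {|e₁⟩,|e₂⟩} is an orthonormal basis of ℂ² and σ₁, σ₂ are 2×2 density matrices, the modulus of the (1,4) entry equals the modulus of the (2,3) entry: |ρ₁₄| = |ρ₂₃|. -/
open Matrix Kronecker ComplexOrder

/-- Outer product |v⟩⟨v| of a vector with itself. -/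
noncomputable def outer {n : Type*} (v : n → ℂ) : Matrix n n ℂ :=
  Matrix.vecMulVec v (fun j => star (v j))

/-!
Both entries are sums over the basis vectors of `p k · e k 0 · conj (e k 1)` times an
off-diagonal entry of `σ k`. Completeness of the orthonormal basis `{e 0, e 1}` gives
`∑ k, e k 0 · conj (e k 1) = 0`, so with `t := e 0 0 · conj (e 0 1)` the two entries are
`t z` and `t conj z` for `z = p 0 (σ 0)₀₁ - p 1 (σ 1)₀₁`, using that each `σ k` is Hermitian.
-/

theorem sum_mul_star_eq_ite_of_orthonormal {ι : Type*} [Fintype ι] [DecidableEq ι]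
    {e : ι → ι → ℂ} (horth : ∀ k l, ∑ j, star (e k j) * e l j = if k = l then 1 else 0)
    (i j : ι) : ∑ k, e k i * star (e k j) = if i = j then 1 else 0 := by
  let U : Matrix ι ι ℂ := Matrix.of fun j k => e k j
  have hU : Uᴴ * U = 1 := by
    ext k l
    simpa [U, Matrix.mul_apply, Matrix.one_apply] using horth k l
  simpa [U, Matrix.mul_apply, Matrix.one_apply] using
    congrArg (fun M => M i j) (mul_eq_one_comm.mp hU)

theorem sum_smul_outer_kronecker_apply {ι n m : Type*} [Fintype ι]
    (p : ι → ℝ) (e : ι → n → ℂ) (σ : ι → Matrix m m ℂ) (i j : n) (a b : m) :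
    (∑ k, (p k : ℂ) • (outer (e k) ⊗ₖ σ k)) (i, a) (j, b)
      = ∑ k, (p k : ℂ) * (e k i * star (e k j)) * σ k a b := by
  simp only [Matrix.sum_apply, Matrix.smul_apply, Matrix.kroneckerMap_apply, outer,
    Matrix.vecMulVec_apply, smul_eq_mul, mul_assoc]

theorem stmt0_general (ρ : Matrix (Fin 2 × Fin 2) (Fin 2 × Fin 2) ℂ)
    (p : Fin 2 → ℝ) (e : Fin 2 → (Fin 2 → ℂ)) (σ : Fin 2 → Matrix (Fin 2) (Fin 2) ℂ)
    (horth : ∀ k l, ∑ j, star (e k j) * e l j = if k = l then 1 else 0)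
    (hσpsd : ∀ k, (σ k).PosSemidef)
    (hdecomp : ρ = ∑ k, (p k : ℂ) • (outer (e k) ⊗ₖ σ k)) :
    ‖ρ (0, 0) (1, 1)‖ = ‖ρ (0, 1) (1, 0)‖ := by
  have hcompl := sum_mul_star_eq_ite_of_orthonormal horth 0 1
  simp only [Fin.sum_univ_two, Fin.isValue, zero_ne_one, if_false] at hcompl
  have hσ k : σ k 1 0 = star (σ k 0 1) := ((hσpsd k).isHermitian.apply 1 0).symm
  set z : ℂ := (p 0 : ℂ) * σ 0 0 1 - (p 1 : ℂ) * σ 1 0 1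
  have h01 : ρ (0, 0) (1, 1) = e 0 0 * star (e 0 1) * z := by
    rw [hdecomp, sum_smul_outer_kronecker_apply, Fin.sum_univ_two]
    linear_combination (p 1 : ℂ) * σ 1 0 1 * hcompl
  have h10 : ρ (0, 1) (1, 0) = e 0 0 * star (e 0 1) * star z := by
    rw [hdecomp, sum_smul_outer_kronecker_apply, Fin.sum_univ_two, hσ, hσ]
    simp only [z, star_sub, star_mul', Complex.star_def, Complex.conj_ofReal] at hcompl ⊢
    linear_combination (p 1 : ℂ) * (starRingEnd ℂ) (σ 1 0 1) * hcompl
  rw [h01, h10, norm_mul, norm_mul _ (star z), norm_star]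

theorem stmt0 (ρ : Matrix (Fin 2 × Fin 2) (Fin 2 × Fin 2) ℂ)
    (hρ : ρ.PosSemidef) (htr : ρ.trace = 1)
    (p : Fin 2 → ℝ) (e : Fin 2 → (Fin 2 → ℂ)) (σ : Fin 2 → Matrix (Fin 2) (Fin 2) ℂ)
    (hp : ∀ k, 0 ≤ p k) (hpsum : ∑ k, p k = 1)
    (horth : ∀ k l, ∑ j, star (e k j) * e l j = if k = l then 1 else 0)
    (hσpsd : ∀ k, (σ k).PosSemidef) (hσtr : ∀ k, (σ k).trace = 1)
    (hdecomp : ρ = ∑ k, (p k : ℂ) • (outer (e k) ⊗ₖ σ k)) :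
    ‖ρ (0, 0) (1, 1)‖ = ‖ρ (0, 1) (1, 0)‖ :=
  stmt0_general ρ p e σ horth hσpsd hdecomp
end

section
/- Let ρ be a 2n × 2n density matrix on ℂ²⊗ℂⁿ of the zero-discord form ρ = Σ_{l=1,2} q_l |e_l⟩⟨e_l| ⊗ σ_l with {|e_l⟩} an orthonormal basis of ℂ² and σ_l n×n density matrices. Then every 2×2 principal minor of ρ equals the corresponding 2×2 principal minor of ρ^{τ_B}, the partial transpose on the second (n-dimensional) system. -/
open Matrix Kronecker ComplexOrder

/-- Partial transpose on the second tensor factor. -/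
def ptB {m n : ℕ} (ρ : Matrix (Fin m × Fin n) (Fin m × Fin n) ℂ) :
    Matrix (Fin m × Fin n) (Fin m × Fin n) ℂ :=
  fun p q => ρ (p.1, q.2) (q.1, p.2)

/-- The 2×2 principal minor of a matrix on the rows/columns indexed by `a` and `b`. -/
def PM {ι : Type*} (A : Matrix ι ι ℂ) (a b : ι) : ℂ :=
  A a a * A b b - A a b * A b a

lemma keyX (e : Fin 2 → (Fin 2 → ℂ))
    (horth : ∀ k l, ∑ m, star (e k m) * e l m = if k = l then 1 else 0)
    : ∀ i k : Fin 2,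
    e 0 i * star (e 0 k) * star (e 1 i) * e 1 k
      = e 1 i * star (e 1 k) * star (e 0 i) * e 0 k := by
  have h01 := horth 0 1
  have h10 := horth 1 0
  simp [Fin.sum_univ_two] at h01 h10
  simp only [Complex.star_def] at *
  simp only [Fin.forall_fin_two]
  refine ⟨⟨by ring, ?_⟩, ?_, by ring⟩
  · linear_combination e 0 0 * (starRingEnd ℂ) (e 1 0) * h01 - e 1 0 * (starRingEnd ℂ) (e 0 0) * h10
  · linear_combination e 0 1 * (starRingEnd ℂ) (e 1 1) * h01 - e 1 1 * (starRingEnd ℂ) (e 0 1) * h10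

theorem stmt7 (n : ℕ) (ρ : Matrix (Fin 2 × Fin n) (Fin 2 × Fin n) ℂ)
    (hρ : ρ.PosSemidef) (htr : ρ.trace = 1)
    (q : Fin 2 → ℝ) (e : Fin 2 → (Fin 2 → ℂ)) (σ : Fin 2 → Matrix (Fin n) (Fin n) ℂ)
    (hq : ∀ l, 0 ≤ q l) (hqsum : ∑ l, q l = 1)
    (horth : ∀ k l, ∑ m, star (e k m) * e l m = if k = l then 1 else 0)
    (hσpsd : ∀ l, (σ l).PosSemidef) (hσtr : ∀ l, (σ l).trace = 1)
    (hdecomp : ρ = ∑ l, (q l : ℂ) • (outer (e l) ⊗ₖ σ l)) :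
    ∀ a b : Fin 2 × Fin n, PM ρ a b = PM (ptB ρ) a b := by
  rintro ⟨i, j⟩ ⟨k, l⟩
  subst hdecomp
  have key := keyX e horth i k
  simp only [PM, ptB, Finset.sum_apply, Matrix.sum_apply, Matrix.smul_apply,
    Matrix.kroneckerMap_apply, outer, Matrix.vecMulVec_apply, smul_eq_mul,
    Fin.sum_univ_two]
  linear_combination - (q 0 : ℂ) * (q 1 : ℂ) *
    (σ 0 j l * σ 1 l j - σ 1 j l * σ 0 l j) * key
end

section
/- For the 2⊗3 state ρ_{u,c} = u(|02⟩⟨02| + |12⟩⟨12|) + f(|φ⁺⟩⟨φ⁺| + |φ⁻⟩⟨φ⁻| + |ψ⁺⟩⟨ψ⁺|) + c|ψ⁻⟩⟨ψ⁻|, where |φ±⟩ = (|00⟩±|11⟩)/√2, |ψ±⟩=(|01⟩±|10⟩)/√2, 2u + 3f + c = 1, u,c,f ≥ 0, the partial transpose ρ_{u,c}^{τ_B} is positive semidefinite if and only if 3f − c ≥ 0, i.e. u + c ≤ 1/2. -/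
open Matrix ComplexOrder

/-- |φ⁺⟩ = (|00⟩+|11⟩)/√2 embedded in ℂ²⊗ℂ³. -/
noncomputable def phiP : Fin 2 × Fin 3 → ℂ := fun p =>
  if p = (0, 0) then (1 : ℂ) / Real.sqrt 2 else if p = (1, 1) then (1 : ℂ) / Real.sqrt 2 else 0

/-- |φ⁻⟩ = (|00⟩−|11⟩)/√2 embedded in ℂ²⊗ℂ³. -/
noncomputable def phiM : Fin 2 × Fin 3 → ℂ := fun p =>
  if p = (0, 0) then (1 : ℂ) / Real.sqrt 2 else if p = (1, 1) then -(1 : ℂ) / Real.sqrt 2 else 0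

/-- |ψ⁺⟩ = (|01⟩+|10⟩)/√2 embedded in ℂ²⊗ℂ³. -/
noncomputable def psiP : Fin 2 × Fin 3 → ℂ := fun p =>
  if p = (0, 1) then (1 : ℂ) / Real.sqrt 2 else if p = (1, 0) then (1 : ℂ) / Real.sqrt 2 else 0

/-- |ψ⁻⟩ = (|01⟩−|10⟩)/√2 embedded in ℂ²⊗ℂ³. -/
noncomputable def psiM : Fin 2 × Fin 3 → ℂ := fun p =>
  if p = (0, 1) then (1 : ℂ) / Real.sqrt 2 else if p = (1, 0) then -(1 : ℂ) / Real.sqrt 2 else 0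

/-- |02⟩. -/
def ket02 : Fin 2 × Fin 3 → ℂ := fun p => if p = (0, 2) then 1 else 0

/-- |12⟩. -/
def ket12 : Fin 2 × Fin 3 → ℂ := fun p => if p = (1, 2) then 1 else 0

/-- The two-parameter 2⊗3 state ρ_{u,c}. -/
noncomputable def rhoUC (u c f : ℝ) : Matrix (Fin 2 × Fin 3) (Fin 2 × Fin 3) ℂ :=
  (u : ℂ) • (outer ket02 + outer ket12) +
  (f : ℂ) • (outer phiP + outer phiM + outer psiP) + (c : ℂ) • outer psiM

/-!
The Bell projectors are real and symmetric, and partial transposition only moves their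
coherences: the `|01⟩⟨10|` terms of `|ψ±⟩⟨ψ±|` become `|00⟩⟨11|` terms. Hence `ρ^{τ_B}` is a
combination of rank-one projectors onto the mutually orthogonal vectors
`|00⟩ ± |11⟩`, `|01⟩`, `|10⟩`, `|02⟩`, `|12⟩`, with coefficients `(3f - c)/4`, `(f + c)/4`,
`(f + c)/2`, `(f + c)/2`, `u`, `u`. All of them but the first are nonnegative, and the first one
is read off as the expectation value `3f - c` of `ρ^{τ_B}` in `|00⟩ + |11⟩`.
-/

lemma outer_posSemidef {n : Type*} [Finite n] (v : n → ℂ) : (outer v).PosSemidef :=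
  posSemidef_vecMulVec_self_star v

def ket01 : Fin 2 × Fin 3 → ℂ := fun p => if p = (0, 1) then 1 else 0

def ket10 : Fin 2 × Fin 3 → ℂ := fun p => if p = (1, 0) then 1 else 0

def phiPUnnorm : Fin 2 × Fin 3 → ℂ := fun p =>
  if p = (0, 0) then 1 else if p = (1, 1) then 1 else 0

def phiMUnnorm : Fin 2 × Fin 3 → ℂ := fun p =>
  if p = (0, 0) then 1 else if p = (1, 1) then -1 else 0

set_option maxHeartbeats 1000000 in
lemma ptB_rhoUC_eq (u c f : ℝ) :
    ptB (rhoUC u c f) =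
      ((3 * f - c) / 4) • outer phiPUnnorm + ((f + c) / 4) • outer phiMUnnorm +
      ((f + c) / 2) • (outer ket01 + outer ket10) + u • (outer ket02 + outer ket12) := by
  have hsqrt : ((Real.sqrt 2 : ℝ) : ℂ) * ((Real.sqrt 2 : ℝ) : ℂ) = 2 := by
    rw [← Complex.ofReal_mul, Real.mul_self_sqrt zero_le_two]
    norm_num
  have hinv : (((Real.sqrt 2 : ℝ) : ℂ))⁻¹ ^ 2 = 1 / 2 := by
    rw [inv_pow, sq, hsqrt, one_div]
  ext ⟨i, j⟩ ⟨k, l⟩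
  fin_cases i <;> fin_cases j <;> fin_cases k <;> fin_cases l <;>
    simp [ptB, rhoUC, outer, vecMulVec, phiP, phiM, psiP, psiM, ket02, ket12, ket01, ket10,
      phiPUnnorm, phiMUnnorm, Prod.ext_iff, div_mul_div_comm, hsqrt, Complex.real_smul] <;>
    ring_nf <;> simp [hinv] <;> ring_nf

lemma dotProduct_ptB_rhoUC_mulVec_phiPUnnorm (u c f : ℝ) :
    star phiPUnnorm ⬝ᵥ ptB (rhoUC u c f) *ᵥ phiPUnnorm = ((3 * f - c : ℝ) : ℂ) := by
  simp [ptB_rhoUC_eq, dotProduct, mulVec, Fintype.sum_prod_type, Fin.sum_univ_succ, outer,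
    vecMulVec, phiPUnnorm, phiMUnnorm, ket01, ket10, ket02, ket12, Prod.ext_iff,
    Complex.real_smul]
  ring

theorem stmt9_general (u c f : ℝ) (hu : 0 ≤ u) (hc : 0 ≤ c) (hf : 0 ≤ f) :
    (ptB (rhoUC u c f)).PosSemidef ↔ 0 ≤ 3 * f - c := by
  constructor
  · intro hpsd
    have hexp := hpsd.dotProduct_mulVec_nonneg phiPUnnorm
    rwa [dotProduct_ptB_rhoUC_mulVec_phiPUnnorm, Complex.zero_le_real] at hexp
  · intro hcoeff
    have hfc : 0 ≤ f + c := add_nonneg hf hc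
    rw [ptB_rhoUC_eq]
    exact (((outer_posSemidef _).smul (by positivity)).add
      ((outer_posSemidef _).smul (by positivity))).add
      (((outer_posSemidef _).add (outer_posSemidef _)).smul (by positivity)) |>.add
      (((outer_posSemidef _).add (outer_posSemidef _)).smul hu)

theorem stmt9 (u c f : ℝ) (hu : 0 ≤ u) (hc : 0 ≤ c) (hf : 0 ≤ f)
    (hsum : 2 * u + 3 * f + c = 1) :
    (ptB (rhoUC u c f)).PosSemidef ↔ 0 ≤ 3 * f - c :=
  stmt9_general u c f hu hc hf
end

section
/- For the 2⊗3 state ρ_{u,c} as above (with 2u+3f+c=1, u,c,f ≥ 0), all 2×2 principal minors of ρ_{u,c} are invariant under partial transposition on the second system if and only if c = f. -/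
open Matrix ComplexOrder

lemma rhoUC_apply (u c f : ℝ) (p q : Fin 2 × Fin 3) :
    rhoUC u c f p q = u * (ket02 p * star (ket02 q) + ket12 p * star (ket12 q)) +
      f * (phiP p * star (phiP q) + phiM p * star (phiM q) + psiP p * star (psiP q)) +
      c * (psiM p * star (psiM q)) := by
  simp only [rhoUC, outer, Matrix.smul_apply, Matrix.add_apply, vecMulVec_apply, smul_eq_mul]

set_option maxHeartbeats 2000000 in
lemma key (u f : ℝ) : ptB (rhoUC u f f) = rhoUC u f f := by
  ext ⟨i, j⟩ ⟨k, l⟩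
  show rhoUC u f f (i, l) (k, j) = rhoUC u f f (i, j) (k, l)
  rw [rhoUC_apply, rhoUC_apply]
  fin_cases i <;> fin_cases k <;> fin_cases j <;> fin_cases l <;>
    norm_num [phiP, phiM, psiP, psiM, ket02, ket12, Prod.ext_iff, Fin.ext_iff] <;> ring_nf

theorem stmt10 (u c f : ℝ) (hu : 0 ≤ u) (hc : 0 ≤ c) (hf : 0 ≤ f)
    (hsum : 2 * u + 3 * f + c = 1) :
    (∀ a b : Fin 2 × Fin 3, PM (rhoUC u c f) a b = PM (ptB (rhoUC u c f)) a b) ↔ c = f := by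
  constructor
  · intro h
    have h1 := h (0, 0) (1, 1)
    simp only [PM, ptB, rhoUC_apply] at h1
    have h2 : (0:ℝ) < Real.sqrt 2 := Real.sqrt_pos.mpr (by norm_num)
    have hs : ((Real.sqrt 2 : ℝ) : ℂ) * ((Real.sqrt 2 : ℝ) : ℂ) = 2 := by
      norm_cast; exact Real.mul_self_sqrt (by norm_num)
    have hinv : (((Real.sqrt 2 : ℝ)):ℂ)⁻¹ * (((Real.sqrt 2 : ℝ)):ℂ)⁻¹ = 2⁻¹ := by
      rw [← mul_inv, hs]
    norm_num [phiP, phiM, psiP, psiM, ket02, ket12, Prod.ext_iff, one_div, neg_div,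
      neg_mul, mul_neg, hinv, Fin.ext_iff] at h1
    have hb : ((f:ℂ) - c) * ((f:ℂ) - c) = 0 := by linear_combination (4:ℂ) * h1
    have hfc : (f:ℂ) - c = 0 := mul_self_eq_zero.mp hb
    have : (f:ℝ) = c := by exact_mod_cast sub_eq_zero.mp hfc
    linarith
  · intro h
    subst h
    intro a b
    rw [key]
end

section
/- For any two n×n Hermitian matrices ρ and σ, ‖ρ − σ‖₂² ≥ ‖λ(ρ) − λ(σ)‖₂², where λ(A) denotes the vector of eigenvalues of A arranged in decreasing order and ‖·‖₂ is the Frobenius norm (resp. Euclidean norm on vectors). -/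
/-!
Expanding the squares, the inequality reduces to `Re tr (A B) ≤ ∑ i, a i * b i`. Diagonalising
`A = U diag(μ) U*` and `B = V diag(ν) V*` gives `Re tr (A B) = ∑ i j, |W i j|² μ i ν j` with
`W = U* V` unitary, so the matrix `(|W i j|²)` is doubly stochastic. By Birkhoff's theorem it is a
convex combination of permutation matrices, and for each permutation the rearrangement inequality
bounds the corresponding sum by `∑ i, a i * b i`, because `a` and `b` are sorted the same way.
-/

open Matrix

namespace Matrix

variable {m n ι 𝕜 R : Type*} [RCLike 𝕜]

def normSqEntries (W : Matrix m n 𝕜) : Matrix m n ℝ := of fun i j => ‖W i j‖ ^ 2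

@[simp]
theorem normSqEntries_apply (W : Matrix m n 𝕜) (i : m) (j : n) :
    normSqEntries W i j = ‖W i j‖ ^ 2 :=
  rfl

@[simp]
theorem normSqEntries_one [DecidableEq n] : normSqEntries (1 : Matrix n n 𝕜) = 1 := by
  ext i j
  by_cases h : i = j <;> simp [one_apply, h]

theorem re_trace_mul_conjTranspose_self [Fintype m] [Fintype n] (C : Matrix m n 𝕜) :
    RCLike.re (trace (C * Cᴴ)) = ∑ i, ∑ j, ‖C i j‖ ^ 2 := by
  simp only [trace, diag_apply, mul_apply, conjTranspose_apply, RCLike.star_def, RCLike.mul_conj,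
    map_sum]
  norm_cast

variable [Fintype ι] [DecidableEq ι]

theorem dotProduct_mulVec_le_of_mem_doublyStochastic [Field R] [LinearOrder R]
    [IsStrictOrderedRing R] {M : Matrix ι ι R} (hM : M ∈ doublyStochastic R ι) {a b : ι → R}
    (hab : Monovary a b) : a ⬝ᵥ (M *ᵥ b) ≤ a ⬝ᵥ b := by
  let f : Matrix ι ι R →ₗ[R] R :=
    { toFun := fun M => a ⬝ᵥ (M *ᵥ b)
      map_add' := fun M N => by simp only [add_mulVec, dotProduct_add]
      map_smul' := fun c M => by simp only [smul_mulVec, dotProduct_smul, RingHom.id_apply] }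
  rw [← SetLike.mem_coe, doublyStochastic_eq_convexHull_permMatrix] at hM
  obtain ⟨_, ⟨σ, rfl⟩, hσ⟩ :=
    (f.convexOn convex_univ).exists_ge_of_mem_convexHull (Set.subset_univ _) hM
  calc a ⬝ᵥ (M *ᵥ b) ≤ a ⬝ᵥ (b ∘ σ) := by simpa [f, permMatrix_mulVec] using hσ
    _ ≤ a ⬝ᵥ b := hab.sum_mul_comp_perm_le_sum_mul

theorem normSqEntries_mem_doublyStochastic {U : Matrix ι ι 𝕜} (hU : U ∈ unitaryGroup ι 𝕜) :
    normSqEntries U ∈ doublyStochastic ℝ ι := by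
  rw [mem_doublyStochastic_iff_sum]
  refine ⟨fun i j => sq_nonneg _, fun i => ?_, fun j => ?_⟩
  · have := congr_fun₂ (mem_unitaryGroup_iff.mp hU) i i
    simp only [mul_apply, star_apply, RCLike.star_def, RCLike.mul_conj, one_apply_eq] at this
    exact_mod_cast this
  · have := congr_fun₂ (mem_unitaryGroup_iff'.mp hU) j j
    simp only [mul_apply, star_apply, RCLike.star_def, RCLike.conj_mul, one_apply_eq] at this
    exact_mod_cast this

theorem re_trace_diagonal_mul_mul_diagonal_mul_conjTranspose (μ ν : ι → ℝ) (W : Matrix ι ι 𝕜) :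
    RCLike.re (trace (diagonal (RCLike.ofReal ∘ μ) * W * diagonal (RCLike.ofReal ∘ ν) * Wᴴ)) =
      μ ⬝ᵥ (normSqEntries W *ᵥ ν) := by
  simp only [trace, diag_apply, mul_apply (N := Wᴴ), diagonal_mul, mul_diagonal,
    conjTranspose_apply, Function.comp_apply, map_sum, dotProduct, mulVec, normSqEntries_apply,
    Finset.mul_sum]
  refine Finset.sum_congr rfl fun i _ => Finset.sum_congr rfl fun j _ => ?_
  rw [← RCLike.ofReal_re (K := 𝕜) (μ i * _), RCLike.star_def]
  congr 1
  push_cast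
  rw [← RCLike.mul_conj]
  ring

namespace IsHermitian

variable {A B : Matrix ι ι 𝕜} (hA : A.IsHermitian) (hB : B.IsHermitian)
include hA hB

theorem re_trace_mul :
    RCLike.re (trace (A * B)) = hA.eigenvalues ⬝ᵥ
      (normSqEntries ((hA.eigenvectorUnitary : Matrix ι ι 𝕜)ᴴ *
        (hB.eigenvectorUnitary : Matrix ι ι 𝕜)) *ᵥ hB.eigenvalues) := by
  rw [← re_trace_diagonal_mul_mul_diagonal_mul_conjTranspose]
  conv_lhs => rw [hA.spectral_theorem, hB.spectral_theorem]
  simp only [Unitary.conjStarAlgAut_apply, Matrix.mul_assoc]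
  rw [trace_mul_comm]
  simp only [conjTranspose_mul, conjTranspose_conjTranspose, star_eq_conjTranspose,
    Matrix.mul_assoc]

omit hB in
theorem re_trace_mul_self : RCLike.re (trace (A * A)) = hA.eigenvalues ⬝ᵥ hA.eigenvalues := by
  rw [hA.re_trace_mul hA, ← star_eq_conjTranspose, Unitary.coe_star_mul_self, normSqEntries_one,
    one_mulVec]

theorem re_trace_mul_le_dotProduct_of_monovary (pa pb : Equiv.Perm ι)
    (h : Monovary (hA.eigenvalues ∘ pa) (hB.eigenvalues ∘ pb)) :
    RCLike.re (trace (A * B)) ≤ (hA.eigenvalues ∘ pa) ⬝ᵥ (hB.eigenvalues ∘ pb) := by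
  set S := normSqEntries ((hA.eigenvectorUnitary : Matrix ι ι 𝕜)ᴴ *
    (hB.eigenvectorUnitary : Matrix ι ι 𝕜))
  have hS : S.submatrix pa pb ∈ doublyStochastic ℝ ι :=
    reindex_mem_doublyStochastic (e₁ := pa.symm) (e₂ := pb.symm)
      (normSqEntries_mem_doublyStochastic (star hA.eigenvectorUnitary * hB.eigenvectorUnitary).2)
  calc RCLike.re (trace (A * B))
      = (hA.eigenvalues ∘ pa) ⬝ᵥ (S.submatrix pa pb *ᵥ (hB.eigenvalues ∘ pb)) := by
        rw [hA.re_trace_mul hB, submatrix_mulVec_equiv, comp_equiv_dotProduct_comp_equiv,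
          Function.comp_assoc, Equiv.self_comp_symm, Function.comp_id]
    _ ≤ _ := dotProduct_mulVec_le_of_mem_doublyStochastic hS h

end IsHermitian

end Matrix

theorem stmt11 {n : ℕ} (A B : Matrix (Fin n) (Fin n) ℂ)
    (hA : A.IsHermitian) (hB : B.IsHermitian)
    (a b : Fin n → ℝ) (pa pb : Equiv.Perm (Fin n))
    (ha : a = hA.eigenvalues ∘ pa) (hb : b = hB.eigenvalues ∘ pb)
    (haSorted : Antitone a) (hbSorted : Antitone b) :
    ∑ i, (a i - b i) ^ 2 ≤ ∑ i, ∑ j, ‖(A - B) i j‖ ^ 2 := by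
  have hab : RCLike.re (trace (A * B)) ≤ a ⬝ᵥ b := by
    subst ha hb
    exact hA.re_trace_mul_le_dotProduct_of_monovary hB pa pb (haSorted.monovary hbSorted)
  have haa : a ⬝ᵥ a = RCLike.re (trace (A * A)) := by
    rw [ha, comp_equiv_dotProduct_comp_equiv, hA.re_trace_mul_self]
  have hbb : b ⬝ᵥ b = RCLike.re (trace (B * B)) := by
    rw [hb, comp_equiv_dotProduct_comp_equiv, hB.re_trace_mul_self]
  calc ∑ i, (a i - b i) ^ 2 = a ⬝ᵥ a + b ⬝ᵥ b - 2 * (a ⬝ᵥ b) := by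
        simp only [dotProduct, Finset.mul_sum, ← Finset.sum_add_distrib, ← Finset.sum_sub_distrib]
        exact Finset.sum_congr rfl fun i _ => by ring
    _ ≤ RCLike.re (trace (A * A)) + RCLike.re (trace (B * B))
          - 2 * RCLike.re (trace (A * B)) := by
        rw [haa, hbb]; linarith
    _ = RCLike.re (trace ((A - B) * (A - B)ᴴ)) := by
        rw [(hA.sub hB).eq, sub_mul, mul_sub, mul_sub, trace_sub, trace_sub, trace_sub,
          trace_mul_comm B A]
        simp only [map_sub]
        ring
    _ = ∑ i, ∑ j, ‖(A - B) i j‖ ^ 2 := re_trace_mul_conjTranspose_self (A - B)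
end
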